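/- arXiv:0804.1280 — 5 statements merged into one kernel-verified Lean document; each statement's English description precedes it below -/
import Mathlib

section
/- Let $A$, $B$, $C$ be three non-collinear points in the Euclidean plane and let $k = \max\{|AC|, |BC|\}$. Then the set of points $P$ in the plane such that $|PA| - |PC|$ and $|PB| - |PC|$ are both integers has cardinality at most $4(k+1)^2$. -/
/-!
Put `C` at the origin and write `z = P - C`. Expanding `‖z - a‖² = ‖z‖² - 2⟪a, z⟫ + ‖a‖²` turns
`|PA| - |PC| = m` into the linear equation `2⟪A - C, z⟫ = |AC|² - m² - 2m‖z‖`. As `A - C` and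
`B - C` form a basis of the plane, for fixed `(m, n)` the point `z` is an affine function
`u + t • v` of `t = ‖z‖`, and the same line with `t = -‖z‖` carries the solutions for `(-m, -n)`.
The equation `‖u + t • v‖ = |t|` is a nondegenerate quadratic in `t` (otherwise `A`, `B`, `C` would
lie on the line through `C` with direction `v`), so `±(m, n)` contribute at most two points. Since
`|m| ≤ |AC|` and `|n| ≤ |BC|`, there are at most `(⌊|AC|⌋ + 1)(⌊|BC|⌋ + 1)` classes
`{±(m, n), ±(m, -n)}`, each contributing at most four points.
-/

open Module Polynomial

open scoped RealInnerProductSpace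

theorem encard_setOf_quadratic_eq_zero_le_two {K : Type*} [Field K] {a b c : K}
    (h : ¬(a = 0 ∧ b = 0 ∧ c = 0)) : {x : K | a * x ^ 2 + b * x + c = 0}.encard ≤ 2 := by
  classical
  set p : K[X] := C a * X ^ 2 + C b * X + C c
  have hp : p ≠ 0 := by
    intro hp
    refine h ⟨?_, ?_, ?_⟩
    · simpa [p] using congrArg (coeff · 2) hp
    · simpa [p] using congrArg (coeff · 1) hp
    · simpa [p] using congrArg (coeff · 0) hp
  have hroots : {x : K | a * x ^ 2 + b * x + c = 0} = p.roots.toFinset := by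
    ext x; simp [p, hp]
  rw [hroots, Set.encard_coe_eq_coe_finsetCard]
  exact_mod_cast (Multiset.toFinset_card_le _).trans (p.card_roots'.trans natDegree_quadratic_le)

theorem collinear_of_sub_mem_span_singleton {k V : Type*} [Field k] [AddCommGroup V] [Module k V]
    {A B C v : V} (hA : A - C ∈ k ∙ v) (hB : B - C ∈ k ∙ v) : Collinear k {A, B, C} := by
  rw [collinear_iff_of_mem (p₀ := C) (by simp)]
  refine ⟨v, ?_⟩
  simp only [Set.mem_insert_iff, Set.mem_singleton_iff, forall_eq_or_imp, forall_eq, vadd_eq_add]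
  obtain ⟨r, hr⟩ := Submodule.mem_span_singleton.mp hA
  obtain ⟨s, hs⟩ := Submodule.mem_span_singleton.mp hB
  exact ⟨⟨r, by rw [hr, sub_add_cancel]⟩, ⟨s, by rw [hs, sub_add_cancel]⟩, ⟨0, by simp⟩⟩

theorem linearIndependent_sub_of_not_collinear {k V : Type*} [Field k] [AddCommGroup V]
    [Module k V] {A B C : V} (h : ¬Collinear k {A, B, C}) :
    LinearIndependent k ![A - C, B - C] := by
  rw [LinearIndependent.pair_iff]
  intro s t hst
  by_contra hne
  by_cases hs : s = 0
  · have hBC : B - C = 0 := by simp_all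
    exact h (collinear_of_sub_mem_span_singleton (Submodule.mem_span_singleton_self _)
      (hBC ▸ Submodule.zero_mem _))
  · refine h (collinear_of_sub_mem_span_singleton ?_ (Submodule.mem_span_singleton_self _))
    refine Submodule.mem_span_singleton.mpr ⟨-t / s, ?_⟩
    rw [neg_div, neg_smul, div_eq_inv_mul, mul_smul, eq_neg_of_add_eq_zero_right hst, smul_neg,
      neg_neg, inv_smul_smul₀ hs]

def distDiffLocus {X : Type*} [PseudoMetricSpace X] (A B C : X) (m n : ℝ) : Set X :=
  {P | dist P A - dist P C = m ∧ dist P B - dist P C = n}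

theorem natAbs_le_floor_dist_of_dist_sub_dist {X : Type*} [PseudoMetricSpace X] {A C P : X}
    {m : ℤ} (h : dist P A - dist P C = m) : m.natAbs ≤ ⌊dist A C⌋₊ := by
  refine Nat.le_floor ?_
  rw [Nat.cast_natAbs, Int.cast_abs, ← h, dist_comm P A, dist_comm P C]
  exact abs_dist_sub_le A C P

section InnerProductSpace

variable {E : Type*} [NormedAddCommGroup E] [InnerProductSpace ℝ E]

theorem encard_setOf_norm_add_smul_eq_abs_le_two {u v : E} (h : ¬(u = 0 ∧ ‖v‖ = 1)) :
    {t : ℝ | ‖u + t • v‖ = |t|}.encard ≤ 2 := by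
  have hquad : {t : ℝ | ‖u + t • v‖ = |t|} =
      {t | (‖v‖ ^ 2 - 1) * t ^ 2 + 2 * ⟪u, v⟫ * t + ‖u‖ ^ 2 = 0} := by
    ext t
    simp only [Set.mem_ofPred_eq]
    rw [← sq_eq_sq₀ (norm_nonneg _) (abs_nonneg t), sq_abs, norm_add_sq_real, norm_smul,
      inner_smul_right, Real.norm_eq_abs, mul_pow, sq_abs]
    constructor <;> intro ht <;> linarith
  rw [hquad]
  refine encard_setOf_quadratic_eq_zero_le_two fun ⟨hv, _, hu⟩ => h ⟨?_, ?_⟩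
  · simpa using hu
  · nlinarith [norm_nonneg v]

theorem eq_inner_smul_of_norm_sq_eq_inner_sq {a v : E} (hv : ‖v‖ = 1)
    (h : ‖a‖ ^ 2 = ⟪a, v⟫ ^ 2) : a = ⟪a, v⟫ • v := by
  rw [← sub_eq_zero, ← norm_eq_zero, ← sq_eq_zero_iff, norm_sub_sq_real, norm_smul,
    inner_smul_right, Real.norm_eq_abs, mul_pow, sq_abs, hv, h]
  ring

theorem two_mul_inner_sub_eq_of_dist_sub_dist {A C P : E} {m : ℝ}
    (h : dist P A - dist P C = m) :
    2 * ⟪A - C, P - C⟫ = ‖A - C‖ ^ 2 - m ^ 2 - 2 * m * ‖P - C‖ := by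
  have hsq : ‖(P - C) - (A - C)‖ ^ 2 = (‖P - C‖ + m) ^ 2 := by
    rw [sub_sub_sub_cancel_right, ← dist_eq_norm, ← dist_eq_norm, ← h]
    ring
  rw [norm_sub_sq_real, real_inner_comm] at hsq
  linarith

theorem existsUnique_inner_eq_pair [FiniteDimensional ℝ E] (hE : finrank ℝ E = 2) {a b : E}
    (hab : LinearIndependent ℝ ![a, b]) (α β : ℝ) :
    ∃! w : E, ⟪a, w⟫ = α ∧ ⟪b, w⟫ = β := by
  set L : E →ₗ[ℝ] ℝ × ℝ := (innerₗ E a).prod (innerₗ E b)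
  have hinj : Function.Injective L := by
    intro w w' hw
    refine InnerProductSpace.ext_inner_left_basis
      (basisOfLinearIndependentOfCardEqFinrank hab (by simp [hE])) fun i => ?_
    fin_cases i <;> simp_all [L, coe_basisOfLinearIndependentOfCardEqFinrank]
  have hsurj : Function.Surjective L :=
    (LinearMap.injective_iff_surjective_of_finrank_eq_finrank (by simp [hE])).mp hinj
  simpa [L, Prod.ext_iff] using (Function.Bijective.existsUnique ⟨hinj, hsurj⟩ (α, β))

theorem exists_signed_norm_of_mem_distDiffLocus_union {A B C P : E} {m n : ℝ}
    (hP : P ∈ distDiffLocus A B C m n ∪ distDiffLocus A B C (-m) (-n)) :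
    ∃ t : ℝ, |t| = ‖P - C‖ ∧ 2 * ⟪A - C, P - C⟫ = ‖A - C‖ ^ 2 - m ^ 2 - 2 * m * t ∧
      2 * ⟪B - C, P - C⟫ = ‖B - C‖ ^ 2 - n ^ 2 - 2 * n * t := by
  rcases hP with ⟨hA, hB⟩ | ⟨hA, hB⟩
  · exact ⟨‖P - C‖, abs_norm _, two_mul_inner_sub_eq_of_dist_sub_dist hA,
      two_mul_inner_sub_eq_of_dist_sub_dist hB⟩
  · refine ⟨-‖P - C‖, by simp, ?_, ?_⟩
    · rw [two_mul_inner_sub_eq_of_dist_sub_dist hA]; ring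
    · rw [two_mul_inner_sub_eq_of_dist_sub_dist hB]; ring

theorem encard_distDiffLocus_union_neg_le_two [FiniteDimensional ℝ E] (hE : finrank ℝ E = 2)
    {A B C : E} (h : ¬Collinear ℝ {A, B, C}) (m n : ℝ) :
    (distDiffLocus A B C m n ∪ distDiffLocus A B C (-m) (-n)).encard ≤ 2 := by
  have hab := linearIndependent_sub_of_not_collinear h
  obtain ⟨u, ⟨hua, hub⟩, -⟩ := existsUnique_inner_eq_pair hE hab
    ((‖A - C‖ ^ 2 - m ^ 2) / 2) ((‖B - C‖ ^ 2 - n ^ 2) / 2)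
  obtain ⟨v, ⟨hva, hvb⟩, -⟩ := existsUnique_inner_eq_pair hE hab (-m) (-n)
  have hsub : distDiffLocus A B C m n ∪ distDiffLocus A B C (-m) (-n) ⊆
      (fun t : ℝ => u + t • v + C) '' {t | ‖u + t • v‖ = |t|} := by
    intro P hP
    obtain ⟨t, ht, hPA, hPB⟩ := exists_signed_norm_of_mem_distDiffLocus_union hP
    have hPC : P - C = u + t • v := by
      refine (existsUnique_inner_eq_pair hE hab _ _).unique (y₁ := P - C) ⟨rfl, rfl⟩ ⟨?_, ?_⟩
      · simp only [inner_add_right, inner_smul_right, hua, hva]; linarith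
      · simp only [inner_add_right, inner_smul_right, hub, hvb]; linarith
    exact ⟨t, by rw [Set.mem_ofPred_eq, ← hPC, ht], by dsimp only; rw [← hPC, sub_add_cancel]⟩
  have hnondeg : ¬(u = 0 ∧ ‖v‖ = 1) := by
    rintro ⟨rfl, hv⟩
    simp only [inner_zero_right] at hua hub
    refine h (collinear_of_sub_mem_span_singleton (v := v) ?_ ?_)
    · rw [eq_inner_smul_of_norm_sq_eq_inner_sq (a := A - C) hv (by rw [hva]; linarith)]
      exact Submodule.smul_mem _ _ (Submodule.mem_span_singleton_self _)
    · rw [eq_inner_smul_of_norm_sq_eq_inner_sq (a := B - C) hv (by rw [hvb]; linarith)]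
      exact Submodule.smul_mem _ _ (Submodule.mem_span_singleton_self _)
  calc _ ≤ _ := Set.encard_le_encard hsub
    _ ≤ _ := Set.encard_image_le _ _
    _ ≤ 2 := encard_setOf_norm_add_smul_eq_abs_le_two hnondeg

theorem encard_setOf_int_dist_sub_dist_le [FiniteDimensional ℝ E] (hE : finrank ℝ E = 2)
    {A B C : E} (h : ¬Collinear ℝ {A, B, C}) :
    {P : E | (∃ m : ℤ, dist P A - dist P C = m) ∧ (∃ n : ℤ, dist P B - dist P C = n)}.encard ≤
      (4 * ((⌊dist A C⌋₊ + 1) * (⌊dist B C⌋₊ + 1)) : ℕ) := by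
  set L := distDiffLocus A B C
  set U : ℕ × ℕ → Set E := fun p =>
    (L p.1 p.2 ∪ L (-p.1) (-p.2)) ∪ (L p.1 (-p.2) ∪ L (-p.1) (-(-p.2)))
  set F := Finset.range (⌊dist A C⌋₊ + 1) ×ˢ Finset.range (⌊dist B C⌋₊ + 1)
  have hU : ∀ p, (U p).encard ≤ 4 := fun p => calc
    _ ≤ 2 + 2 := (Set.encard_union_le _ _).trans (add_le_add
      (encard_distDiffLocus_union_neg_le_two hE h _ _)
      (encard_distDiffLocus_union_neg_le_two hE h _ _))
    _ = 4 := by norm_num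
  have hcover : {P : E | (∃ m : ℤ, dist P A - dist P C = m) ∧
      (∃ n : ℤ, dist P B - dist P C = n)} ⊆ ⋃ p ∈ F, U p := by
    rintro P ⟨⟨m, hm⟩, ⟨n, hn⟩⟩
    refine Set.mem_iUnion₂.mpr ⟨(m.natAbs, n.natAbs), Finset.mem_product.mpr
      ⟨Finset.mem_range_succ_iff.mpr (natAbs_le_floor_dist_of_dist_sub_dist hm),
        Finset.mem_range_succ_iff.mpr (natAbs_le_floor_dist_of_dist_sub_dist hn)⟩, ?_⟩
    rcases Int.natAbs_eq m with hm' | hm' <;> rcases Int.natAbs_eq n with hn' | hn' <;>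
      rw [hm'] at hm <;> rw [hn'] at hn <;> push_cast at hm hn <;>
      simp [U, L, distDiffLocus, hm, hn]
  calc _ ≤ (⋃ p ∈ F, U p).encard := Set.encard_le_encard hcover
    _ ≤ ∑ p ∈ F, (U p).encard := Finset.set_encard_biUnion_le _ _
    _ ≤ ∑ p ∈ F, 4 := Finset.sum_le_sum fun p _ => hU p
    _ = _ := by simp [F]; ring

end InnerProductSpace

theorem finitely_many_points_integral_distance_differences
    (A B C : ℂ) (h : ¬ Collinear ℝ ({A, B, C} : Set ℂ))
    (k : ℝ) (hk : k = max (dist A C) (dist B C)) :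
    {P : ℂ | (∃ m : ℤ, dist P A - dist P C = m) ∧ (∃ n : ℤ, dist P B - dist P C = n)}.Finite ∧
    (({P : ℂ | (∃ m : ℤ, dist P A - dist P C = m) ∧
        (∃ n : ℤ, dist P B - dist P C = n)}.ncard : ℝ)) ≤ 4 * (k + 1) ^ 2 := by
  obtain ⟨hfin, hcard⟩ := Set.encard_le_coe_iff_finite_ncard_le.mp
    (encard_setOf_int_dist_sub_dist_le Complex.finrank_real_complex h)
  have hA : (⌊dist A C⌋₊ : ℝ) + 1 ≤ k + 1 := by
    rw [hk]; gcongr; exact (Nat.floor_le dist_nonneg).trans (le_max_left _ _)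
  have hB : (⌊dist B C⌋₊ : ℝ) + 1 ≤ k + 1 := by
    rw [hk]; gcongr; exact (Nat.floor_le dist_nonneg).trans (le_max_right _ _)
  refine ⟨hfin, ?_⟩
  calc _ ≤ ((4 * ((⌊dist A C⌋₊ + 1) * (⌊dist B C⌋₊ + 1)) : ℕ) : ℝ) := by exact_mod_cast hcard
    _ ≤ 4 * (k + 1) ^ 2 := by
      push_cast
      rw [sq]
      gcongr
      exact (by positivity : (0 : ℝ) ≤ ⌊dist A C⌋₊ + 1).trans hA
end

section
/- Any infinite set of points in the Euclidean plane with pairwise integral distances is contained in a line. -/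
/-!
Choose three non-collinear points `A, B, C` of the set. For every point `p` of it, the integers
`|pA| - |pB|` and `|pA| - |pC|` are bounded by `|AB|` and `|AC|`, so `p` lies in one of finitely
many intersections of a hyperbola branch with foci `A, B` and one with foci `A, C`. Each such
intersection is finite: with `r = |pA|`, subtracting the squared distance equations gives two
linear equations for `p - A` with right-hand sides affine in `r`, hence `p - A = r • α + β`, and
`‖r • α + β‖² = r²` is a nontrivial quadratic equation in `r`, since it holds identically only when
`B - A` and `C - A` are both multiples of `α`.
-/

open Module Set Polynomial RealInnerProductSpace

lemma finite_setOf_quadratic_eq_zero_or_forall {R : Type*} [CommRing R] [IsDomain R] (a b c : R) :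
    {r : R | a * r ^ 2 + b * r + c = 0}.Finite ∨ ∀ r : R, a * r ^ 2 + b * r + c = 0 := by
  by_contra! ⟨hinf, r, hr⟩
  have hp := eq_zero_of_infinite_isRoot (C a * X ^ 2 + C b * X + C c) (by simpa using hinf)
  exact hr (by simpa using congrArg (eval r) hp)

lemma sub_mem_Icc_of_dist_eq_intCast {X : Type*} [PseudoMetricSpace X] {p A B : X} {i j m : ℤ}
    (hi : dist p A = i) (hj : dist p B = j) (hm : dist A B = m) : i - j ∈ Icc (-m) m := by
  have := abs_dist_sub_le A B p
  rw [dist_comm A p, dist_comm B p, hi, hj, hm] at this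
  rw [mem_Icc, ← abs_le]
  exact_mod_cast this

section Plane

variable {V : Type*} [NormedAddCommGroup V] [InnerProductSpace ℝ V]

lemma collinear_of_forall_collinear_triple {P : Set V} {A B : V}
    (hAB : A ≠ B) (h : ∀ C ∈ P, Collinear ℝ {A, B, C}) : Collinear ℝ P := by
  have hP : P ⊆ line[ℝ, A, B] := fun C hC =>
    (h C hC).mem_affineSpan_of_mem_of_ne (by simp) (by simp) (by simp) hAB
  have hspan : vectorSpan ℝ P ≤ vectorSpan ℝ {A, B} :=
    calc vectorSpan ℝ P ≤ vectorSpan ℝ (line[ℝ, A, B] : Set V) := vectorSpan_mono ℝ hP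
      _ = vectorSpan ℝ {A, B} := by
        rw [← AffineSubspace.direction_eq_vectorSpan, direction_affineSpan]
  exact (Submodule.rank_mono hspan).trans (collinear_pair ℝ A B)

lemma eq_smul_of_norm_sq_eq_of_inner_eq {α b : V} {k : ℝ} (hα : ‖α‖ = 1) (hb : ‖b‖ ^ 2 = k ^ 2)
    (hαb : ⟪b, α⟫ = k) : b = k • α := by
  rw [← sub_eq_zero, ← norm_eq_zero, ← sq_eq_zero_iff, norm_sub_sq_real,
    inner_smul_right, norm_smul, hα, hb, hαb, mul_one, Real.norm_eq_abs, sq_abs]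
  ring

lemma inner_sub_eq_of_dist_sub_eq {x A B : V} {k : ℝ} (h : dist x A - dist x B = k) :
    ⟪B - A, x - A⟫ = k * dist x A + (‖B - A‖ ^ 2 - k ^ 2) / 2 := by
  have hsq : ‖x - A‖ ^ 2 - 2 * ⟪x - A, B - A⟫ + ‖B - A‖ ^ 2 = (‖x - A‖ - k) ^ 2 := by
    rw [← norm_sub_sq_real, sub_sub_sub_cancel_right, ← dist_eq_norm, ← dist_eq_norm]
    congr 1
    linarith
  rw [real_inner_comm, dist_eq_norm]
  linarith

variable [Fact (finrank ℝ V = 2)]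

attribute [local instance] FiniteDimensional.of_fact_finrank_eq_two

lemma collinear_of_inner_vsub_eq_zero {u A B C : V} (hu : u ≠ 0) (hB : ⟪u, B - A⟫ = 0)
    (hC : ⟪u, C - A⟫ = 0) : Collinear ℝ {A, B, C} := by
  have : Fact (finrank ℝ V = 1 + 1) := ‹_›
  have hspan : vectorSpan ℝ {A, B, C} ≤ (ℝ ∙ u)ᗮ := by
    rw [vectorSpan_eq_span_vsub_set_right ℝ (mem_insert A _), Submodule.span_le]
    rintro _ ⟨p, hp, rfl⟩
    rw [SetLike.mem_coe, Submodule.mem_orthogonal_singleton_iff_inner_right]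
    change ⟪u, p - A⟫ = 0
    rcases hp with rfl | rfl | rfl
    · simp
    · exact hB
    · exact hC
  rw [collinear_iff_finrank_le_one,
    ← Submodule.finrank_orthogonal_span_singleton (𝕜 := ℝ) (n := 1) hu]
  exact Submodule.finrank_mono hspan

lemma bijective_inner_vsub_of_not_collinear {A B C : V} (h : ¬Collinear ℝ {A, B, C}) :
    Function.Bijective fun u : V => (⟪B - A, u⟫, ⟪C - A, u⟫) := by
  let L : V →ₗ[ℝ] ℝ × ℝ := (innerₗ V (B - A)).prod (innerₗ V (C - A))
  have hL : Function.Injective L := by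
    refine (injective_iff_map_eq_zero L).mpr fun u hu => ?_
    by_contra hu0
    obtain ⟨hB, hC⟩ := Prod.mk_eq_zero.mp hu
    rw [innerₗ_apply_apply, real_inner_comm] at hB hC
    exact h (collinear_of_inner_vsub_eq_zero hu0 hB hC)
  exact ⟨hL, (LinearMap.injective_iff_surjective_of_finrank_eq_finrank (by simp [Fact.out])).mp hL⟩

theorem finite_setOf_dist_sub_eq {A B C : V} (h : ¬Collinear ℝ {A, B, C}) (k l : ℝ) :
    {x : V | dist x A - dist x B = k ∧ dist x A - dist x C = l}.Finite := by
  obtain ⟨hinj, hsurj⟩ := bijective_inner_vsub_of_not_collinear h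
  obtain ⟨α, hα⟩ := hsurj (k, l)
  obtain ⟨β, hβ⟩ := hsurj ((‖B - A‖ ^ 2 - k ^ 2) / 2, (‖C - A‖ ^ 2 - l ^ 2) / 2)
  simp only [Prod.mk.injEq] at hα hβ
  have hx : ∀ x ∈ {x : V | dist x A - dist x B = k ∧ dist x A - dist x C = l},
      x - A = dist x A • α + β := by
    rintro x ⟨hxB, hxC⟩
    apply hinj
    simp only [inner_add_right, inner_smul_right, inner_sub_eq_of_dist_sub_eq hxB,
      inner_sub_eq_of_dist_sub_eq hxC, hα.1, hα.2, hβ.1, hβ.2]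
    ring_nf
  have hquad (r : ℝ) : ‖r • α + β‖ ^ 2 - r ^ 2 =
      (‖α‖ ^ 2 - 1) * r ^ 2 + 2 * ⟪α, β⟫ * r + ‖β‖ ^ 2 := by
    rw [norm_add_sq_real, norm_smul, real_inner_smul_left, Real.norm_eq_abs, mul_pow, sq_abs]
    ring
  rcases finite_setOf_quadratic_eq_zero_or_forall (‖α‖ ^ 2 - 1) (2 * ⟪α, β⟫) (‖β‖ ^ 2)
    with hfin | hzero
  · refine (hfin.image fun r => A + (r • α + β)).subset fun x hxS =>
      ⟨dist x A, (hquad _).symm.trans ?_, add_eq_of_eq_sub' (hx x hxS).symm⟩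
    rw [← hx x hxS, ← dist_eq_norm, sub_self]
  · have hβ0 : β = 0 := by simpa using hzero 0
    have hα1 : ‖α‖ = 1 := (pow_eq_one_iff_of_nonneg (norm_nonneg α) two_ne_zero).mp
      (by simpa [hβ0, sub_eq_zero] using hzero 1)
    subst hβ0
    simp only [inner_zero_right] at hβ
    have hB := eq_smul_of_norm_sq_eq_of_inner_eq hα1 (by linarith) hα.1
    have hC := eq_smul_of_norm_sq_eq_of_inner_eq hα1 (by linarith) hα.2
    refine absurd ((collinear_iff_of_mem (mem_insert A _)).mpr ⟨α, ?_⟩) h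
    rintro p (rfl | rfl | rfl)
    · exact ⟨0, by simp⟩
    · exact ⟨k, by rw [vadd_eq_add, ← hB, sub_add_cancel]⟩
    · exact ⟨l, by rw [vadd_eq_add, ← hC, sub_add_cancel]⟩

theorem collinear_of_infinite_of_forall_dist_eq_intCast {P : Set V} (hinf : P.Infinite)
    (hint : ∀ p ∈ P, ∀ q ∈ P, ∃ n : ℤ, dist p q = n) : Collinear ℝ P := by
  by_contra hP
  obtain ⟨A, hA, B, hB, hAB⟩ := hinf.nontrivial
  obtain ⟨C, hC, hABC⟩ : ∃ C ∈ P, ¬Collinear ℝ {A, B, C} := by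
    by_contra! h
    exact hP (collinear_of_forall_collinear_triple hAB h)
  obtain ⟨m, hm⟩ := hint A hA B hB
  obtain ⟨n, hn⟩ := hint A hA C hC
  let F : V → ℝ × ℝ := fun x => (dist x A - dist x B, dist x A - dist x C)
  have hT : (Prod.map Int.cast Int.cast '' Icc (-m) m ×ˢ Icc (-n) n : Set (ℝ × ℝ)).Finite :=
    ((finite_Icc _ _).prod (finite_Icc _ _)).image _
  have hfib (z : ℝ × ℝ) : (F ⁻¹' {z}).Finite :=
    (finite_setOf_dist_sub_eq hABC z.1 z.2).subset fun x hx => Prod.ext_iff.mp hx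
  refine hinf ((hT.preimage' fun z _ => hfib z).subset fun p hp => ?_)
  obtain ⟨i, hi⟩ := hint p hp A hA
  obtain ⟨j, hj⟩ := hint p hp B hB
  obtain ⟨o, ho⟩ := hint p hp C hC
  exact ⟨(i - j, i - o), ⟨sub_mem_Icc_of_dist_eq_intCast hi hj hm,
    sub_mem_Icc_of_dist_eq_intCast hi ho hn⟩, by simp [F, hi, hj, ho]⟩

end Plane

theorem erdos_anning_plane (P : Set ℂ) (hinf : P.Infinite)
    (hint : ∀ p ∈ P, ∀ q ∈ P, ∃ n : ℤ, dist p q = n) :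
    Collinear ℝ P :=
  have := Complex.finrank_real_complex_fact
  collinear_of_infinite_of_forall_dist_eq_intCast hinf hint
end

section
/- The integral point set $\mathcal{P} = \{(0,0), (3,0), (0,4), (3,4)\} \subset \mathbb{Z}^2$ is maximal: there is no point $x \in \mathbb{Z}^2 \setminus \mathcal{P}$ whose Euclidean distance to each of the four points of $\mathcal{P}$ is an integer. -/
/-- The point of `ℤ²` viewed as a complex number. -/
def ptC (p : ℤ × ℤ) : ℂ := ⟨(p.1 : ℝ), (p.2 : ℝ)⟩

lemma sqmod2 (n : ℤ) : n ^ 2 % 2 = n % 2 := by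
  have h : Even ((n - 1) * n) := by simpa using Int.even_mul_succ_self (n - 1)
  obtain ⟨k, hk⟩ := h
  have hm : n ^ 2 ≡ n [ZMOD 2] := Int.ModEq.symm (Int.modEq_iff_dvd.mpr ⟨k, by linear_combination hk⟩)
  exact hm

lemma lemA (a b n m : ℤ) (hn : 0 ≤ n) (hm : 0 ≤ m)
    (h1 : n ^ 2 = a ^ 2 + b ^ 2) (h2 : m ^ 2 = (a - 3) ^ 2 + b ^ 2) (hb : b ≠ 0) :
    n - m = 1 ∨ n - m = -1 := by
  have hb1 : 1 ≤ b ^ 2 := by rcases hb.lt_or_gt with h | h <;> nlinarith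
  have hprod : (n * m) ^ 2 = (a ^ 2 - 3 * a + b ^ 2) ^ 2 + 9 * b ^ 2 := by
    rw [mul_pow, h1, h2]; ring
  have hnm : 0 ≤ n * m := mul_nonneg hn hm
  have hgt : a ^ 2 - 3 * a + b ^ 2 < n * m := by
    by_contra hcon
    push_neg at hcon
    nlinarith [hprod, hb1,
      mul_nonneg (by linarith : (0:ℤ) ≤ a ^ 2 - 3 * a + b ^ 2 - n * m)
        (by linarith : (0:ℤ) ≤ a ^ 2 - 3 * a + b ^ 2 + n * m)]
  have hsq : (n - m) ^ 2 < 9 := by nlinarith [hgt, h1, h2]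
  have hub : n - m ≤ 2 := by by_contra hh; push_neg at hh; nlinarith
  have hlb : -2 ≤ n - m := by by_contra hh; push_neg at hh; nlinarith
  have hd : n ^ 2 - m ^ 2 = 6 * a - 9 := by linear_combination h1 - h2
  have e1 : n ^ 2 % 2 = n % 2 := sqmod2 n
  have e2 : m ^ 2 % 2 = m % 2 := sqmod2 m
  generalize n ^ 2 = N at hd e1
  generalize m ^ 2 = M at hd e2
  omega

lemma lemB (a b n m : ℤ) (hn : 0 ≤ n) (hm : 0 ≤ m)
    (h1 : n ^ 2 = a ^ 2 + b ^ 2) (h2 : m ^ 2 = a ^ 2 + (b - 4) ^ 2)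
    (ha : a ≠ 0) (hb : b ≠ 2) :
    n - m = 2 ∨ n - m = -2 := by
  have ha1 : 1 ≤ a ^ 2 := by rcases ha.lt_or_gt with h | h <;> nlinarith
  have hprod : (n * m) ^ 2 = (b ^ 2 - 4 * b + a ^ 2) ^ 2 + 16 * a ^ 2 := by
    rw [mul_pow, h1, h2]; ring
  have hnm : 0 ≤ n * m := mul_nonneg hn hm
  have hgt : b ^ 2 - 4 * b + a ^ 2 < n * m := by
    by_contra hcon
    push_neg at hcon
    nlinarith [hprod, ha1,
      mul_nonneg (by linarith : (0:ℤ) ≤ b ^ 2 - 4 * b + a ^ 2 - n * m)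
        (by linarith : (0:ℤ) ≤ b ^ 2 - 4 * b + a ^ 2 + n * m)]
  have hsq : (n - m) ^ 2 < 16 := by nlinarith [hgt, h1, h2]
  have hub : n - m ≤ 3 := by by_contra hh; push_neg at hh; nlinarith
  have hlb : -3 ≤ n - m := by by_contra hh; push_neg at hh; nlinarith
  have hd : n ^ 2 - m ^ 2 = 8 * b - 16 := by linear_combination h1 - h2
  have hne : n ≠ m := by
    intro h
    apply hb
    rw [h] at hd
    linarith
  have e1 : n ^ 2 % 2 = n % 2 := sqmod2 n
  have e2 : m ^ 2 % 2 = m % 2 := sqmod2 m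
  generalize n ^ 2 = N at hd e1
  generalize m ^ 2 = M at hd e2
  omega

lemma lem16 (n m : ℤ) (hn : 0 ≤ n) (hm : 0 ≤ m) (h : n ^ 2 = m ^ 2 + 16) :
    m = 0 ∨ m = 3 := by
  have h1 : m < n := by by_contra hh; push_neg at hh; nlinarith
  have h2 : n ≤ m + 4 := by by_contra hh; push_neg at hh; nlinarith
  have hd : n ^ 2 - m ^ 2 = 16 := by linear_combination h
  have e1 : n ^ 2 % 2 = n % 2 := sqmod2 n
  have e2 : m ^ 2 % 2 = m % 2 := sqmod2 m
  have hk : n - m = 2 ∨ n - m = 4 := by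
    generalize n ^ 2 = N at hd e1
    generalize m ^ 2 = M at hd e2
    omega
  rcases hk with hk | hk
  · have h' : n = m + 2 := by omega
    have : 4 * m = 12 := by linear_combination h - (n + m + 2) * h'
    right; omega
  · have h' : n = m + 4 := by omega
    have : 8 * m = 0 := by linear_combination h - (n + m + 4) * h'
    left; omega

lemma lem9 (n m : ℤ) (hn : 0 ≤ n) (hm : 0 ≤ m) (h : n ^ 2 = m ^ 2 + 9) :
    m = 0 ∨ m = 4 := by
  have h1 : m < n := by by_contra hh; push_neg at hh; nlinarith
  have h2 : n ≤ m + 3 := by by_contra hh; push_neg at hh; nlinarith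
  have hd : n ^ 2 - m ^ 2 = 9 := by linear_combination h
  have e1 : n ^ 2 % 2 = n % 2 := sqmod2 n
  have e2 : m ^ 2 % 2 = m % 2 := sqmod2 m
  have hk : n - m = 1 ∨ n - m = 3 := by
    generalize n ^ 2 = N at hd e1
    generalize m ^ 2 = M at hd e2
    omega
  rcases hk with hk | hk
  · have h' : n = m + 1 := by omega
    have : 2 * m = 8 := by linear_combination h - (n + m + 1) * h'
    right; omega
  · have h' : n = m + 3 := by omega
    have : 6 * m = 0 := by linear_combination h - (n + m + 3) * h'
    left; omega

lemma not52 (n : ℤ) (hn : 0 ≤ n) (h : n ^ 2 = 52) : False := by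
  have : n ≤ 8 := by nlinarith
  interval_cases n <;> norm_num at h

lemma not73 (n : ℤ) (hn : 0 ≤ n) (h : n ^ 2 = 73) : False := by
  have : n ≤ 8 := by nlinarith
  interval_cases n <;> norm_num at h

lemma not5 (n : ℤ) (hn : 0 ≤ n) (h : n ^ 2 = 5) : False := by
  have : n ≤ 2 := by nlinarith
  interval_cases n <;> norm_num at h

lemma key (x p : ℤ × ℤ) (n : ℤ) (h : dist (ptC x) (ptC p) = n) :
    0 ≤ n ∧ n ^ 2 = (x.1 - p.1) ^ 2 + (x.2 - p.2) ^ 2 := by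
  have h0 : (0:ℝ) ≤ (n : ℝ) := h ▸ dist_nonneg
  have hsq : (n:ℝ) ^ 2 = ((x.1 : ℝ) - (p.1 : ℝ)) ^ 2 + ((x.2 : ℝ) - (p.2 : ℝ)) ^ 2 := by
    rw [← h, Complex.dist_eq_re_im, Real.sq_sqrt (by positivity)]
    simp [ptC]
  refine ⟨by exact_mod_cast h0, ?_⟩
  exact_mod_cast hsq

theorem rectangle_3_4_maximal :
    ∀ x : ℤ × ℤ, x ∉ ({(0, 0), (3, 0), (0, 4), (3, 4)} : Set (ℤ × ℤ)) →
      ¬ (∀ p ∈ ({(0, 0), (3, 0), (0, 4), (3, 4)} : Set (ℤ × ℤ)),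
          ∃ n : ℤ, dist (ptC x) (ptC p) = n) := by
  rintro ⟨a, b⟩ hx hall
  simp only [Set.mem_insert_iff, Set.mem_singleton_iff, Prod.mk.injEq, not_or] at hx
  obtain ⟨hx1, hx2, hx3, hx4⟩ := hx
  obtain ⟨m1, hd1⟩ := hall (0, 0) (by simp)
  obtain ⟨m2, hd2⟩ := hall (3, 0) (by simp)
  obtain ⟨m3, hd3⟩ := hall (0, 4) (by simp)
  obtain ⟨m4, hd4⟩ := hall (3, 4) (by simp)
  obtain ⟨hp1, h1⟩ := key _ _ _ hd1
  obtain ⟨hp2, h2⟩ := key _ _ _ hd2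
  obtain ⟨hp3, h3⟩ := key _ _ _ hd3
  obtain ⟨hp4, h4⟩ := key _ _ _ hd4
  have h1' : m1 ^ 2 = a ^ 2 + b ^ 2 := by simpa using h1
  have h2' : m2 ^ 2 = (a - 3) ^ 2 + b ^ 2 := by simpa using h2
  have h3' : m3 ^ 2 = a ^ 2 + (b - 4) ^ 2 := by simpa using h3
  have h4' : m4 ^ 2 = (a - 3) ^ 2 + (b - 4) ^ 2 := by simpa using h4
  clear h1 h2 h3 h4 hd1 hd2 hd3 hd4
  by_cases hb0 : b = 0
  · -- on the line b = 0
    have h316 : m3 ^ 2 = m1 ^ 2 + 16 := by linear_combination h3' - h1' - 8 * hb0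
    rcases lem16 m3 m1 hp3 hp1 h316 with h | h
    · have ha2 : a ^ 2 = 0 := by linear_combination -h1' + m1 * h - b * hb0
      exact hx1 ⟨sq_eq_zero_iff.mp ha2, hb0⟩
    · have ha9 : a ^ 2 = 9 := by linear_combination -h1' + (m1 + 3) * h - b * hb0
      have hz : (a - 3) * (a + 3) = 0 := by linear_combination ha9
      rcases mul_eq_zero.mp hz with h' | h'
      · exact hx2 ⟨by omega, hb0⟩
      · have ha : a = -3 := by omega
        exact not52 m4 hp4 (by linear_combination h4' + (a - 9) * ha + (b - 8) * hb0)
  by_cases hb4 : b = 4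
  · have h116 : m1 ^ 2 = m3 ^ 2 + 16 := by linear_combination h1' - h3' + 8 * hb4
    rcases lem16 m1 m3 hp1 hp3 h116 with h | h
    · have ha2 : a ^ 2 = 0 := by linear_combination -h3' + m3 * h - (b - 4) * hb4
      exact hx3 ⟨sq_eq_zero_iff.mp ha2, hb4⟩
    · have ha9 : a ^ 2 = 9 := by linear_combination -h3' + (m3 + 3) * h - (b - 4) * hb4
      have hz : (a - 3) * (a + 3) = 0 := by linear_combination ha9
      rcases mul_eq_zero.mp hz with h' | h'
      · exact hx4 ⟨by omega, hb4⟩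
      · have ha : a = -3 := by omega
        exact not52 m2 hp2 (by linear_combination h2' + (a - 9) * ha + (b + 4) * hb4)
  by_cases ha0 : a = 0
  · have h29 : m2 ^ 2 = m1 ^ 2 + 9 := by linear_combination h2' - h1' - 6 * ha0
    rcases lem9 m2 m1 hp2 hp1 h29 with h | h
    · have hb2' : b ^ 2 = 0 := by linear_combination -h1' + m1 * h - a * ha0
      exact hb0 (sq_eq_zero_iff.mp hb2')
    · have hb16 : b ^ 2 = 16 := by linear_combination -h1' + (m1 + 4) * h - a * ha0
      have hz : (b - 4) * (b + 4) = 0 := by linear_combination hb16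
      rcases mul_eq_zero.mp hz with h' | h'
      · exact hb4 (by omega)
      · have hb' : b = -4 := by omega
        exact not73 m4 hp4 (by linear_combination h4' + (a - 6) * ha0 + (b - 12) * hb')
  by_cases ha3 : a = 3
  · have h19 : m1 ^ 2 = m2 ^ 2 + 9 := by linear_combination h1' - h2' + 6 * ha3
    rcases lem9 m1 m2 hp1 hp2 h19 with h | h
    · have hb2' : b ^ 2 = 0 := by linear_combination -h2' + m2 * h - (a - 3) * ha3
      exact hb0 (sq_eq_zero_iff.mp hb2')
    · have hb16 : b ^ 2 = 16 := by linear_combination -h2' + (m2 + 4) * h - (a - 3) * ha3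
      have hz : (b - 4) * (b + 4) = 0 := by linear_combination hb16
      rcases mul_eq_zero.mp hz with h' | h'
      · exact hb4 (by omega)
      · have hb' : b = -4 := by omega
        exact not73 m3 hp3 (by linear_combination h3' + (a + 3) * ha3 + (b - 12) * hb')
  by_cases hb2 : b = 2
  · -- midline: m1^2 = a^2 + 4, a ≠ 0, impossible
    have h5 : m1 ^ 2 = a ^ 2 + 4 := by linear_combination h1' + (b + 2) * hb2
    rcases lt_or_gt_of_ne ha0 with hc | hc
    · -- a ≤ -1
      have hlt : -a < m1 := by
        by_contra hh; push_neg at hh; nlinarith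
      have hle : -a + 1 ≤ m1 := by omega
      have hsq2 : (-a + 1) ^ 2 ≤ m1 ^ 2 :=
        pow_le_pow_left₀ (by omega) hle 2
      have haa : a = -1 := by nlinarith [hsq2, h5]
      exact not5 m1 hp1 (by rw [haa] at h5; linarith [h5])
    · have hlt : a < m1 := by
        by_contra hh; push_neg at hh; nlinarith
      have hle : a + 1 ≤ m1 := by omega
      have hsq2 : (a + 1) ^ 2 ≤ m1 ^ 2 :=
        pow_le_pow_left₀ (by omega) hle 2
      have haa : a = 1 := by nlinarith [hsq2, h5]
      exact not5 m1 hp1 (by rw [haa] at h5; linarith [h5])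
  -- general case
  have he := lemA a b m1 m2 hp1 hp2 h1' h2' hb0
  have hf := lemB a b m1 m3 hp1 hp3 h1' h3' ha0 hb2
  have hg := lemB (a - 3) b m2 m4 hp2 hp4 h2' h4' (sub_ne_zero.mpr ha3) hb2
  have hid : m1 ^ 2 + m4 ^ 2 = m2 ^ 2 + m3 ^ 2 := by
    linear_combination h1' + h4' - h2' - h3'
  rcases he with he | he <;> rcases hf with hf | hf <;> rcases hg with hg | hg <;>
  · first
    | (have hh2 : m2 = m1 - 1 := by omega)
    | (have hh2 : m2 = m1 + 1 := by omega)
    first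
    | (have hh3 : m3 = m1 - 2 := by omega)
    | (have hh3 : m3 = m1 + 2 := by omega)
    first
    | (have hh4 : m4 = m1 - 3 := by omega)
    | (have hh4 : m4 = m1 + 3 := by omega)
    | (have hh4 : m4 = m1 - 1 := by omega)
    | (have hh4 : m4 = m1 + 1 := by omega)
    rw [hh2, hh3, hh4] at hid
    first
    | (have hc : (8:ℤ) * m1 = 4 := by linear_combination hid)
    | (have hc : (8:ℤ) * m1 = 4 := by linear_combination -hid)
    | (have hc : (8:ℤ) * m1 = -4 := by linear_combination hid)
    | (have hc : (8:ℤ) * m1 = -4 := by linear_combination -hid)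
    | (have hc : (0:ℤ) = 4 := by linear_combination hid)
    | (have hc : (0:ℤ) = -4 := by linear_combination hid)
    omega
end

section
/- The five points $(0,0)$, $(0,-4)$, $(0,4)$, $(-3,0)$, $(3,0)$ form a maximal integral point set over $\mathbb{Z}^2$: their pairwise distances are integers, and no point of $\mathbb{Z}^2$ outside this set has integral distance to all five points. -/
lemma dist_int (p q : ℤ × ℤ) (n : ℤ) (hn : 0 ≤ n)
    (h : n ^ 2 = (p.1 - q.1) ^ 2 + (p.2 - q.2) ^ 2) :
    dist (ptC p) (ptC q) = n := by
  rw [Complex.dist_eq_re_im]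
  show Real.sqrt (((p.1 : ℝ) - (q.1 : ℝ)) ^ 2 + ((p.2 : ℝ) - (q.2 : ℝ)) ^ 2) = n
  have h2 : ((p.1 : ℝ) - (q.1 : ℝ)) ^ 2 + ((p.2 : ℝ) - (q.2 : ℝ)) ^ 2 = (n : ℝ) ^ 2 := by
    exact_mod_cast h.symm
  rw [h2, Real.sqrt_sq (by exact_mod_cast hn)]

lemma int_of_dist (p q : ℤ × ℤ) (n : ℤ) (h : dist (ptC p) (ptC q) = n) :
    n ^ 2 = (p.1 - q.1) ^ 2 + (p.2 - q.2) ^ 2 := by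
  rw [Complex.dist_eq_re_im] at h
  have h0 : ((p.1 : ℝ) - (q.1 : ℝ)) ^ 2 + ((p.2 : ℝ) - (q.2 : ℝ)) ^ 2 = (n : ℝ) ^ 2 := by
    rw [show ((p.1 : ℝ)) = (ptC p).re from rfl]
    rw [show ((p.2 : ℝ)) = (ptC p).im from rfl]
    rw [show ((q.1 : ℝ)) = (ptC q).re from rfl]
    rw [show ((q.2 : ℝ)) = (ptC q).im from rfl]
    rw [← h, Real.sq_sqrt (by positivity)]
  have : ((n ^ 2 : ℤ) : ℝ) = (((p.1 - q.1) ^ 2 + (p.2 - q.2) ^ 2 : ℤ) : ℝ) := by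
    push_cast
    linarith
  exact_mod_cast this

-- divisor-style lemmas via u^2 = B^2 + k
lemma sqdiff_bounds (u B k : ℤ) (hk : 0 < k) (h : u ^ 2 = B ^ 2 + k) :
    (u - B) ∣ k ∧ -k ≤ u - B ∧ u - B ≤ k ∧ (u + B) ∣ k ∧ -k ≤ u + B ∧ u + B ≤ k := by
  have h1 : (u - B) * (u + B) = k := by ring_nf; linarith
  have hd : (u - B) ∣ k := ⟨_, h1.symm⟩
  have hs : (u + B) ∣ k := ⟨u - B, by rw [← h1]; ring⟩
  refine ⟨hd, ?_, Int.le_of_dvd hk hd, hs, ?_, Int.le_of_dvd hk hs⟩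
  · have := Int.le_of_dvd hk ((Int.neg_dvd).mpr hd); linarith
  · have := Int.le_of_dvd hk ((Int.neg_dvd).mpr hs); linarith

lemma L16 (a A : ℤ) (h : A ^ 2 = a ^ 2 + 16) : a = 0 ∨ a = 3 ∨ a = -3 := by
  obtain ⟨hd, h2, h3, hs, h4, h5⟩ := sqdiff_bounds A a 16 (by norm_num) h
  have h1 : (A - a) * (A + a) = 16 := by ring_nf; linarith
  obtain ⟨d, hdd⟩ : ∃ d, A - a = d := ⟨_, rfl⟩
  rw [hdd] at h1 h2 h3
  interval_cases d <;> omega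

lemma L9 (b G : ℤ) (h : G ^ 2 = b ^ 2 + 9) : b = 0 ∨ b = 4 ∨ b = -4 := by
  obtain ⟨hd, h2, h3, hs, h4, h5⟩ := sqdiff_bounds G b 9 (by norm_num) h
  have h1 : (G - b) * (G + b) = 9 := by ring_nf; linarith
  obtain ⟨d, hdd⟩ : ∃ d, G - b = d := ⟨_, rfl⟩
  rw [hdd] at h1 h2 h3
  interval_cases d <;> omega

lemma L15 (u B : ℤ) (h : u ^ 2 = B ^ 2 + 15) : u ^ 2 = 16 ∨ u ^ 2 = 64 := by
  obtain ⟨hd, h2, h3, hs, h4, h5⟩ := sqdiff_bounds u B 15 (by norm_num) h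
  have h1 : (u - B) * (u + B) = 15 := by ring_nf; linarith
  obtain ⟨d, hdd⟩ : ∃ d, u - B = d := ⟨_, rfl⟩
  rw [hdd] at h1 h2 h3
  have : u = 4 ∨ u = -4 ∨ u = 8 ∨ u = -8 := by interval_cases d <;> omega
  rcases this with rfl | rfl | rfl | rfl <;> norm_num

lemma L12 (u B : ℤ) (h : u ^ 2 = B ^ 2 + 12) : u ^ 2 = 16 := by
  obtain ⟨hd, h2, h3, hs, h4, h5⟩ := sqdiff_bounds u B 12 (by norm_num) h
  have h1 : (u - B) * (u + B) = 12 := by ring_nf; linarith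
  obtain ⟨d, hdd⟩ : ∃ d, u - B = d := ⟨_, rfl⟩
  rw [hdd] at h1 h2 h3
  have : u = 4 ∨ u = -4 := by interval_cases d <;> omega
  rcases this with rfl | rfl <;> norm_num

lemma L7 (u B : ℤ) (h : u ^ 2 = B ^ 2 + 7) : u ^ 2 = 16 := by
  obtain ⟨hd, h2, h3, hs, h4, h5⟩ := sqdiff_bounds u B 7 (by norm_num) h
  have h1 : (u - B) * (u + B) = 7 := by ring_nf; linarith
  obtain ⟨d, hdd⟩ : ∃ d, u - B = d := ⟨_, rfl⟩
  rw [hdd] at h1 h2 h3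
  have : u = 4 ∨ u = -4 := by interval_cases d <;> omega
  rcases this with rfl | rfl <;> norm_num

lemma no_sq_45 (a : ℤ) (h : a ^ 2 = 45) : False := by
  have h1 : a ≤ 7 := by nlinarith [sq_nonneg (a - 7)]
  have h2 : -7 ≤ a := by nlinarith [sq_nonneg (a + 7)]
  interval_cases a <;> omega

/-- inner case: the small variable v with v^2 < 16 -/
lemma inner (a b u v B : ℤ) (ha : a ≠ 0) (hb : b ≠ 0)
    (huv : u * v = 4 * b) (hsum : u ^ 2 + v ^ 2 = B ^ 2 + 16)
    (hkey : (u ^ 2 - 16) * (v ^ 2 - 16) = -16 * a ^ 2)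
    (hv : v ^ 2 < 16) : False := by
  have ha2 : 0 < a ^ 2 := by positivity
  have hv1 : v ≤ 3 := by nlinarith [sq_nonneg (v - 4)]
  have hv2 : -3 ≤ v := by nlinarith [sq_nonneg (v + 4)]
  interval_cases v
  · -- v = -3
    have hu2 : u ^ 2 = B ^ 2 + 7 := by linarith
    have := L7 u B hu2
    nlinarith
  · -- v = -2
    have hu2 : u ^ 2 = B ^ 2 + 12 := by linarith
    have := L12 u B hu2
    nlinarith
  · -- v = -1
    have hu2 : u ^ 2 = B ^ 2 + 15 := by linarith
    rcases L15 u B hu2 with h | h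
    · nlinarith
    · have : a ^ 2 = 45 := by nlinarith
      exact no_sq_45 a this
  · -- v = 0
    simp at huv
    omega
  · -- v = 1
    have hu2 : u ^ 2 = B ^ 2 + 15 := by linarith
    rcases L15 u B hu2 with h | h
    · nlinarith
    · have : a ^ 2 = 45 := by nlinarith
      exact no_sq_45 a this
  · -- v = 2
    have hu2 : u ^ 2 = B ^ 2 + 12 := by linarith
    have := L12 u B hu2
    nlinarith
  · -- v = 3
    have hu2 : u ^ 2 = B ^ 2 + 7 := by linarith
    have := L7 u B hu2
    nlinarith

/-- The cross lemma: integral distances to (0,0), (0,4), (0,-4) force a = 0 or b = 0. -/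
lemma crossV (a b A B C : ℤ)
    (hA : A ^ 2 = a ^ 2 + (b + 4) ^ 2)
    (hB : B ^ 2 = a ^ 2 + b ^ 2)
    (hC : C ^ 2 = a ^ 2 + (b - 4) ^ 2) :
    a = 0 ∨ b = 0 := by
  by_contra hcon
  push_neg at hcon
  obtain ⟨ha, hb⟩ := hcon
  -- A and C have the same parity
  have hpar : Even (A - C) := by
    by_contra hodd
    rw [Int.not_even_iff_odd] at hodd
    have hodd2 : Odd (A + C) := by
      have : A + C = (A - C) + 2 * C := by ring
      rw [this]
      exact hodd.add_even (even_two_mul C)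
    have : Odd ((A - C) * (A + C)) := hodd.mul hodd2
    have heq : (A - C) * (A + C) = 16 * b := by ring_nf; linarith
    rw [heq] at this
    exact (Int.not_odd_iff_even.mpr ⟨8 * b, by ring⟩) this
  obtain ⟨v, hv⟩ := hpar
  obtain ⟨u, hu⟩ : ∃ u, A = u + v := ⟨A - v, by ring⟩
  have hCuv : C = u - v := by omega
  rw [hu] at hA
  rw [hCuv] at hC
  have huv : u * v = 4 * b := by
    have h4 : 4 * (u * v) = 16 * b := by linear_combination hA - hC
    linarith
  have hsum : u ^ 2 + v ^ 2 = B ^ 2 + 16 := by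
    have h4 : 2 * (u ^ 2 + v ^ 2) = 2 * B ^ 2 + 32 := by
      linear_combination hA + hC - 2 * hB
    linarith
  have hkey : (u ^ 2 - 16) * (v ^ 2 - 16) = -16 * a ^ 2 := by
    linear_combination (u * v + 4 * b) * huv - 16 * hsum - 16 * hB
  have ha2 : 0 < a ^ 2 := by positivity
  have hsmall : v ^ 2 < 16 ∨ u ^ 2 < 16 := by
    by_contra hc
    push_neg at hc
    obtain ⟨h1, h2⟩ := hc
    nlinarith [mul_nonneg (by linarith : (0:ℤ) ≤ u ^ 2 - 16)
      (by linarith : (0:ℤ) ≤ v ^ 2 - 16)]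
  rcases hsmall with h | h
  · exact inner a b u v B ha hb huv hsum hkey h
  · exact inner a b v u B ha hb (by linarith [mul_comm u v]) (by linarith)
      (by linarith [mul_comm (u ^ 2 - 16) (v ^ 2 - 16)]) h

theorem five_point_set_maximal :
    (∀ p ∈ ({(0, 0), (0, -4), (0, 4), (-3, 0), (3, 0)} : Set (ℤ × ℤ)),
      ∀ q ∈ ({(0, 0), (0, -4), (0, 4), (-3, 0), (3, 0)} : Set (ℤ × ℤ)),
        ∃ n : ℤ, dist (ptC p) (ptC q) = n) ∧
    ∀ x : ℤ × ℤ, x ∉ ({(0, 0), (0, -4), (0, 4), (-3, 0), (3, 0)} : Set (ℤ × ℤ)) →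
      ¬ (∀ p ∈ ({(0, 0), (0, -4), (0, 4), (-3, 0), (3, 0)} : Set (ℤ × ℤ)),
          ∃ n : ℤ, dist (ptC x) (ptC p) = n) := by
  constructor
  · intro p hp q hq
    simp only [Set.mem_insert_iff, Set.mem_singleton_iff] at hp hq
    rcases hp with rfl | rfl | rfl | rfl | rfl <;>
      rcases hq with rfl | rfl | rfl | rfl | rfl <;>
      first
      | (refine ⟨0, dist_int _ _ 0 ?_ ?_⟩ <;> decide)
      | (refine ⟨3, dist_int _ _ 3 ?_ ?_⟩ <;> decide)
      | (refine ⟨4, dist_int _ _ 4 ?_ ?_⟩ <;> decide)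
      | (refine ⟨5, dist_int _ _ 5 ?_ ?_⟩ <;> decide)
      | (refine ⟨6, dist_int _ _ 6 ?_ ?_⟩ <;> decide)
      | (refine ⟨8, dist_int _ _ 8 ?_ ?_⟩ <;> decide)
  · rintro ⟨a, b⟩ hx hall
    obtain ⟨B, hB0⟩ := hall (0, 0) (by simp)
    obtain ⟨A, hA0⟩ := hall (0, -4) (by simp)
    obtain ⟨C, hC0⟩ := hall (0, 4) (by simp)
    obtain ⟨H, hH0⟩ := hall (-3, 0) (by simp)
    obtain ⟨G, hG0⟩ := hall (3, 0) (by simp)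
    have hB := int_of_dist _ _ _ hB0
    have hA := int_of_dist _ _ _ hA0
    have hC := int_of_dist _ _ _ hC0
    have hH := int_of_dist _ _ _ hH0
    have hG := int_of_dist _ _ _ hG0
    simp only at hB hA hC hH hG
    have hB' : B ^ 2 = a ^ 2 + b ^ 2 := by linear_combination hB
    have hA' : A ^ 2 = a ^ 2 + (b + 4) ^ 2 := by linear_combination hA
    have hC' : C ^ 2 = a ^ 2 + (b - 4) ^ 2 := by linear_combination hC
    simp only [Set.mem_insert_iff, Set.mem_singleton_iff, Prod.mk.injEq, not_or] at hx
    rcases crossV a b A B C hA' hB' hC' with rfl | rfl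
    · -- a = 0 : use H² = b² + 9
      have hH' : H ^ 2 = b ^ 2 + 9 := by linear_combination hH
      rcases L9 b H hH' with rfl | rfl | rfl <;> simp at hx
    · -- b = 0 : use A² = a² + 16
      have hA'' : A ^ 2 = a ^ 2 + 16 := by linear_combination hA
      rcases L16 a A hA'' with rfl | rfl | rfl <;> simp at hx
end

section
/- Let $R$ be a positive integer and $\eta_s, \eta_t \in \mathbb{Z}[i]$ with $|\eta_s|^2 = |\eta_t|^2 = R^2$, such that $\eta_s \overline{\eta_t}$ is divisible by $R$ in $\mathbb{Z}[i]$. Then the Euclidean distance between the complex numbers $\eta_s^2/R$ and $\eta_t^2/R$ is a non-negative integer. -/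
/-!
Write `ηs * conj ηt = R * u` with `u ∈ ℤ[i]`. Multiplying `ηs² - ηt²` by `conj ηt²` turns it into
`R² (u² - R²)`, and since `|u| = R` we have `R² = u * conj u`, so `u² - R² = u (u - conj u)`.
Hence `|ηs² - ηt²| = 2 R |Im u|`, and the distance is the integer `2 |Im u|`.
-/

open ComplexConjugate

namespace Complex

theorem norm_eq_abs_of_mul_conj_eq {r : ℝ} (hr : r ≠ 0) {z₁ z₂ w : ℂ}
    (h₁ : ‖z₁‖ = |r|) (h₂ : ‖z₂‖ = |r|) (h : z₁ * conj z₂ = r * w) : ‖w‖ = |r| := by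
  have := congrArg norm h
  rw [norm_mul, norm_mul, norm_conj, h₁, h₂, norm_real, Real.norm_eq_abs] at this
  exact (mul_left_cancel₀ (abs_ne_zero.mpr hr) this).symm

theorem norm_sq_sub_sq_of_mul_conj_eq {r : ℝ} {z₁ z₂ w : ℂ}
    (h₁ : ‖z₁‖ = |r|) (h₂ : ‖z₂‖ = |r|) (h : z₁ * conj z₂ = r * w) :
    ‖z₁ ^ 2 - z₂ ^ 2‖ = 2 * |r| * |w.im| := by
  rcases eq_or_ne r 0 with rfl | hr
  · simp_all
  have hw := norm_eq_abs_of_mul_conj_eq hr h₁ h₂ h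
  have hww : w * conj w = (r : ℂ) ^ 2 := by rw [mul_conj', hw]; norm_cast; exact sq_abs r
  have hzz : z₂ * conj z₂ = (r : ℂ) ^ 2 := by rw [mul_conj', h₂]; norm_cast; exact sq_abs r
  have key : (z₁ ^ 2 - z₂ ^ 2) * conj z₂ ^ 2 = (r : ℂ) ^ 2 * (w * (w - conj w)) := by
    linear_combination (z₁ * conj z₂ + r * w) * h - (z₂ * conj z₂ + (r : ℂ) ^ 2) * hzz
      + (r : ℂ) ^ 2 * hww
  have := congrArg norm key
  rw [sub_conj, norm_mul, norm_mul, norm_mul, norm_pow, norm_pow, norm_mul, norm_conj, h₂, hw,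
    norm_real, norm_real, Real.norm_eq_abs, norm_I, mul_one, Real.norm_eq_abs, abs_mul,
    abs_two] at this
  have hr2 : |r| ^ 2 ≠ 0 := pow_ne_zero 2 (abs_ne_zero.mpr hr)
  exact mul_right_cancel₀ hr2 (by rw [this]; ring)

end Complex

namespace GaussianInt

theorem norm_toComplex_of_norm_eq_sq {x : GaussianInt} {R : ℤ} (h : x.norm = R ^ 2) :
    ‖(x : ℂ)‖ = |(R : ℝ)| := by
  rw [← sq_eq_sq₀ (_root_.norm_nonneg _) (abs_nonneg _), Complex.sq_norm, ← intCast_real_norm, h,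
    sq_abs]
  push_cast; rfl

end GaussianInt

open Complex GaussianInt

theorem circle_points_integral_distance (R : ℤ) (hR : 0 < R)
    (ηs ηt : GaussianInt)
    (hs : Zsqrtd.norm ηs = R ^ 2) (ht : Zsqrtd.norm ηt = R ^ 2)
    (hdvd : (R : GaussianInt) ∣ ηs * star ηt) :
    ∃ n : ℕ, dist ((GaussianInt.toComplex ηs) ^ 2 / (R : ℂ))
      ((GaussianInt.toComplex ηt) ^ 2 / (R : ℂ)) = n := by
  obtain ⟨u, hu⟩ := hdvd
  have hconj : (ηs : ℂ) * conj (ηt : ℂ) = ((R : ℝ) : ℂ) * u := by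
    simpa [toComplex_star] using congrArg toComplex hu
  have hsq := norm_sq_sub_sq_of_mul_conj_eq (norm_toComplex_of_norm_eq_sq hs)
    (norm_toComplex_of_norm_eq_sq ht) hconj
  have hR' : (0 : ℝ) < R := Int.cast_pos.mpr hR
  refine ⟨2 * u.im.natAbs, ?_⟩
  rw [dist_eq, ← sub_div, norm_div, hsq, ← GaussianInt.intCast_im, norm_intCast, abs_of_pos hR']
  push_cast [Nat.cast_natAbs]
  field_simp
end
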